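/- Let n ≥ 1, r ≥ 1, l₀ ≥ 1, and let Q be an r×r matrix whose entries are homogeneous polynomials of degree l₀ in n variables over ℂ, and suppose that det Q is not the zero polynomial. Then for every N ≥ 0 the space of ℂ^r-valued polynomials p in n variables of total degree at most N (each component of total degree at most N) satisfying Q(D)p = 0 has dimension r·[C(n+N, N) − C(n+N−l₀, N−l₀)], where the second binomial coefficient is taken to be 0 when N < l₀. -/

import Mathlib

open BigOperators

/-- The iterated partial derivative `∂^α` on `MvPolynomial (Fin n) ℂ`. -/
noncomputable def multiDeriv {n : ℕ} (α : Fin n →₀ ℕ) :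
    MvPolynomial (Fin n) ℂ →ₗ[ℂ] MvPolynomial (Fin n) ℂ :=
  (List.ofFn fun i : Fin n => (MvPolynomial.pderiv i).toLinearMap ^ α i).prod

/-- The constant-coefficient differential operator `Q(D) = ∑_α c_α ∂^α` associated with
the polynomial `Q = ∑_α c_α x^α`, applied to `p`. -/
noncomputable def applyD {n : ℕ} (Q p : MvPolynomial (Fin n) ℂ) : MvPolynomial (Fin n) ℂ :=
  ∑ α ∈ Q.support, Q.coeff α • multiDeriv α p

namespace QH
open MvPolynomial

variable {n : ℕ}

noncomputable abbrev pd (i : Fin n) : MvPolynomial (Fin n) ℂ →ₗ[ℂ] MvPolynomial (Fin n) ℂ :=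
  (MvPolynomial.pderiv i).toLinearMap

lemma pd_comm (i j : Fin n) : Commute (pd i) (pd j) := by
  rcases eq_or_ne i j with rfl | hij
  · exact Commute.refl _
  · show _ = _
    ext s : 1
    apply LinearMap.ext_ring
    change (pd i * pd j) (monomial s 1) = (pd j * pd i) (monomial s 1)
    simp only [Module.End.mul_apply, pd, Derivation.coeFn_coe, Function.comp_apply,
      pderiv_monomial, LinearMap.coe_comp, LinearMap.comp_apply]
    rw [Finsupp.tsub_apply, Finsupp.tsub_apply, Finsupp.single_eq_of_ne' hij,
      Finsupp.single_eq_of_ne' (Ne.symm hij)]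
    rw [tsub_right_comm]
    congr 1
    simp [Nat.sub_zero, mul_comm]

lemma pd_pow_comm (i j : Fin n) (a b : ℕ) : Commute (pd i ^ a) (pd j ^ b) :=
  (pd_comm i j).pow_pow a b

lemma pairwise_comm (α : Fin n →₀ ℕ) :
    ((Finset.univ : Finset (Fin n)) : Set (Fin n)).Pairwise
      (Function.onFun Commute fun i => pd i ^ α i) :=
  fun x _ y _ _ => pd_pow_comm x y _ _

lemma multiDeriv_eq_noncommProd (α : Fin n →₀ ℕ) :
    multiDeriv α = Finset.univ.noncommProd (fun i => pd i ^ α i) (pairwise_comm α) := by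
  simp only [Finset.noncommProd, Fin.univ_val_map, Multiset.noncommProd_coe]
  rfl

lemma multiDeriv_add (α β : Fin n →₀ ℕ) :
    multiDeriv (α + β) = multiDeriv α * multiDeriv β := by
  have commgf : ((Finset.univ : Finset (Fin n)) : Set (Fin n)).Pairwise
      (fun x y => Commute ((fun i => pd i ^ β i) x) ((fun i => pd i ^ α i) y)) :=
    fun x _ y _ _ => pd_pow_comm x y _ _
  rw [multiDeriv_eq_noncommProd, multiDeriv_eq_noncommProd, multiDeriv_eq_noncommProd,
    ← Finset.noncommProd_mul_distrib (fun i => pd i ^ α i) (fun i => pd i ^ β i)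
      (pairwise_comm α) (pairwise_comm β) commgf]
  exact Finset.noncommProd_congr rfl (fun x _ => by simp [pow_add]) _

lemma nat_descFactorial_succ' (m k : ℕ) :
    m.descFactorial (k + 1) = m * (m - 1).descFactorial k := by
  cases m with
  | zero => simp [Nat.zero_descFactorial_succ]
  | succ m => rw [Nat.succ_descFactorial_succ]; simp

lemma pd_pow_monomial (i : Fin n) (k : ℕ) (s : Fin n →₀ ℕ) (a : ℂ) :
    (pd i ^ k) (MvPolynomial.monomial s a) =
      MvPolynomial.monomial (s - Finsupp.single i k) (a * (s i).descFactorial k) := by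
  induction k generalizing s a with
  | zero => simp
  | succ k ih =>
      rw [pow_succ, Module.End.mul_apply]
      show (pd i ^ k) ((pderiv i) (monomial s a)) = _
      rw [pderiv_monomial, ih]
      congr 1
      · rw [tsub_tsub, ← Finsupp.single_add, add_comm 1 k]
      · rw [Finsupp.tsub_apply, Finsupp.single_eq_same, nat_descFactorial_succ' (s i) k]
        push_cast
        ring

lemma multiDeriv_monomial (α : Fin n →₀ ℕ) (s : Fin n →₀ ℕ) (a : ℂ) :
    multiDeriv α (MvPolynomial.monomial s a) =
      MvPolynomial.monomial (s - α) (a * ∏ i, (s i).descFactorial (α i)) := by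
  rw [multiDeriv_eq_noncommProd]
  have key : ∀ (t : Finset (Fin n)) (comm),
      (t.noncommProd (fun i => pd i ^ α i) comm) (MvPolynomial.monomial s a) =
        MvPolynomial.monomial (s - t.sum fun i => Finsupp.single i (α i))
          (a * ∏ i ∈ t, (s i).descFactorial (α i)) := by
    intro t
    induction t using Finset.cons_induction_on with
    | empty => intro comm; simp
    | @cons x t hx ih =>
        intro comm
        rw [Finset.noncommProd_cons, Module.End.mul_apply, ih, pd_pow_monomial,
          Finset.sum_cons, Finset.prod_cons]
        congr 1
        · rw [tsub_tsub, add_comm]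
        · have hxi : (s - t.sum fun i => Finsupp.single i (α i)) x = s x := by
            rw [Finsupp.tsub_apply]
            have : (t.sum fun i => Finsupp.single i (α i)) x = 0 := by
              rw [Finset.sum_apply']
              refine Finset.sum_eq_zero fun j hj => ?_
              exact Finsupp.single_eq_of_ne' (fun h => hx (h ▸ hj))
            rw [this, Nat.sub_zero]
          rw [hxi]
          push_cast
          ring
  rw [key]
  have : (∑ i : Fin n, Finsupp.single i (α i)) = α := by
    ext j
    rw [Finset.sum_apply',
      Finset.sum_eq_single j (fun b _ hb => Finsupp.single_eq_of_ne' hb) (by simp)]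
    simp
  rw [this]

lemma applyD_eq_sum (u p : MvPolynomial (Fin n) ℂ) :
    applyD u p = (AddMonoidAlgebra.coeff u).sum fun α c => c • multiDeriv α p := rfl

lemma applyD_add_left (u v p : MvPolynomial (Fin n) ℂ) :
    applyD (u + v) p = applyD u p + applyD v p := by
  rw [applyD_eq_sum, applyD_eq_sum, applyD_eq_sum, AddMonoidAlgebra.coeff_add]
  exact Finsupp.sum_add_index' (fun α => by simp) (fun α c d => by rw [add_smul])

lemma applyD_monomial_left (α : Fin n →₀ ℕ) (c : ℂ) (p : MvPolynomial (Fin n) ℂ) :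
    applyD (MvPolynomial.monomial α c) p = c • multiDeriv α p := by
  rw [applyD_eq_sum, ← MvPolynomial.single_eq_monomial]
  exact AddMonoidAlgebra.sum_single_index (by simp)

lemma applyD_zero_left (p : MvPolynomial (Fin n) ℂ) : applyD 0 p = 0 := by
  rw [applyD_eq_sum, AddMonoidAlgebra.coeff_zero, Finsupp.sum_zero_index]

lemma applyD_add_right (u p q : MvPolynomial (Fin n) ℂ) :
    applyD u (p + q) = applyD u p + applyD u q := by
  simp [applyD, map_add, smul_add, Finset.sum_add_distrib]

lemma applyD_smul_right (u : MvPolynomial (Fin n) ℂ) (c : ℂ) (p : MvPolynomial (Fin n) ℂ) :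
    applyD u (c • p) = c • applyD u p := by
  simp only [applyD, map_smul, Finset.smul_sum, smul_comm c]

lemma applyD_zero_right (u : MvPolynomial (Fin n) ℂ) : applyD u 0 = 0 := by
  simp [applyD]

lemma applyD_mul (u w p : MvPolynomial (Fin n) ℂ) :
    applyD (u * w) p = applyD u (applyD w p) := by
  induction u using MvPolynomial.induction_on' with
  | add u v hu hv => rw [add_mul, applyD_add_left, applyD_add_left, hu, hv]
  | monomial α c =>
      induction w using MvPolynomial.induction_on' with
      | add w₁ w₂ h1 h2 =>
          rw [mul_add, applyD_add_left, h1, h2, applyD_add_left, applyD_add_right]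
      | monomial β e =>
          rw [MvPolynomial.monomial_mul, applyD_monomial_left, applyD_monomial_left,
            applyD_monomial_left, map_smul, smul_smul, multiDeriv_add, Module.End.mul_apply]

lemma factorial_prod_def (α : Fin n →₀ ℕ) : (∏ i, (α i).factorial : ℕ) = ∏ i, (α i).factorial :=
  rfl

lemma coeff_zero_multiDeriv (α : Fin n →₀ ℕ) (p : MvPolynomial (Fin n) ℂ) :
    (multiDeriv α p).coeff 0 = (∏ i, (α i).factorial : ℕ) * p.coeff α := by
  conv_lhs => rw [p.as_sum]
  rw [map_sum, MvPolynomial.coeff_sum]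
  rw [Finset.sum_eq_single α]
  · rw [multiDeriv_monomial, tsub_self, MvPolynomial.coeff_monomial, if_pos rfl, mul_comm]
    have : (∏ i, (α i).descFactorial (α i)) = ∏ i, (α i).factorial :=
      Finset.prod_congr rfl fun i _ => Nat.descFactorial_self (α i)
    rw [this]
  · intro b _ hb
    rw [multiDeriv_monomial, MvPolynomial.coeff_monomial]
    split_ifs with h
    · -- b - α = 0, so b ≤ α; since b ≠ α, some b i < α i, so descFactorial = 0
      have hle : b ≤ α := tsub_eq_zero_iff_le.mp h
      have : ∃ i, b i < α i := by
        by_contra hc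
        push_neg at hc
        exact hb (le_antisymm hle fun i => hc i)
      obtain ⟨i, hi⟩ := this
      have : (b i).descFactorial (α i) = 0 := Nat.descFactorial_of_lt hi
      rw [Finset.prod_eq_zero (Finset.mem_univ i) this]
      simp
    · rfl
  · intro hα
    rw [MvPolynomial.notMem_support_iff.mp hα]
    simp

/-- conjugation of coefficients -/
noncomputable def conjP (u : MvPolynomial (Fin n) ℂ) : MvPolynomial (Fin n) ℂ :=
  MvPolynomial.map (starRingEnd ℂ) u

lemma conjP_coeff (u : MvPolynomial (Fin n) ℂ) (α : Fin n →₀ ℕ) :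
    (conjP u).coeff α = starRingEnd ℂ (u.coeff α) := MvPolynomial.coeff_map _ _ _

lemma conjP_support (u : MvPolynomial (Fin n) ℂ) : (conjP u).support = u.support :=
  MvPolynomial.support_map_of_injective _ (starRingEnd ℂ).injective

lemma conjP_mul (u v : MvPolynomial (Fin n) ℂ) : conjP (u * v) = conjP u * conjP v :=
  map_mul _ _ _

lemma conjP_eq_zero_iff (u : MvPolynomial (Fin n) ℂ) : conjP u = 0 ↔ u = 0 := by
  constructor
  · intro h
    ext α
    have := congrArg (fun q => MvPolynomial.coeff α q) h
    simp only [conjP_coeff, MvPolynomial.coeff_zero, map_eq_zero] at this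
    simpa using this
  · rintro rfl; simp [conjP]

lemma coeff_zero_applyD (u v : MvPolynomial (Fin n) ℂ) :
    (applyD u v).coeff 0 =
      ∑ α ∈ u.support, u.coeff α * (∏ i, (α i).factorial : ℕ) * v.coeff α := by
  rw [applyD, MvPolynomial.coeff_sum]
  refine Finset.sum_congr rfl fun α _ => ?_
  rw [MvPolynomial.coeff_smul, coeff_zero_multiDeriv, smul_eq_mul, mul_assoc]

lemma coeff_zero_applyD_conj_ne_zero {v : MvPolynomial (Fin n) ℂ} (hv : v ≠ 0) :
    (applyD (conjP v) v).coeff 0 ≠ 0 := by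
  rw [coeff_zero_applyD, conjP_support]
  have hre : (∑ α ∈ v.support, (conjP v).coeff α * (∏ i, (α i).factorial : ℕ) * v.coeff α).re
      = ∑ α ∈ v.support, (∏ i, (α i).factorial : ℕ) * Complex.normSq (v.coeff α) := by
    rw [Complex.re_sum]
    refine Finset.sum_congr rfl fun α _ => ?_
    rw [conjP_coeff]
    have : starRingEnd ℂ (v.coeff α) * (∏ i, (α i).factorial : ℕ) * v.coeff α
        = (∏ i, (α i).factorial : ℕ) * (v.coeff α * starRingEnd ℂ (v.coeff α)) := by ring
    rw [this, Complex.mul_conj]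
    norm_cast
  intro h
  rw [h] at hre
  have hpos : 0 < ∑ α ∈ v.support, ((∏ i, (α i).factorial : ℕ) : ℝ) *
      Complex.normSq (v.coeff α) := by
    apply Finset.sum_pos
    · intro α hα
      apply mul_pos
      · positivity
      · exact Complex.normSq_pos.mpr (MvPolynomial.mem_support_iff.mp hα)
    · exact MvPolynomial.support_nonempty.mpr hv
  rw [← hre] at hpos
  simp at hpos

lemma fdeg_eq (β : Fin n →₀ ℕ) : (β.sum fun _ e => e) = β.degree := rfl

lemma fdeg_add (β γ : Fin n →₀ ℕ) : (β + γ).degree = β.degree + γ.degree := by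
  rw [Finsupp.degree_eq_weight_one, map_add]

lemma fdeg_tsub {α β : Fin n →₀ ℕ} (h : α ≤ β) :
    (β - α).degree + α.degree = β.degree := by
  rw [← fdeg_add, tsub_add_cancel_of_le h]

lemma fdeg_mono {α β : Fin n →₀ ℕ} (h : α ≤ β) : α.degree ≤ β.degree := by
  conv_rhs => rw [← tsub_add_cancel_of_le h, fdeg_add]
  exact Nat.le_add_left _ _

lemma exists_lt_of_fdeg_lt {α β : Fin n →₀ ℕ} (h : β.degree < α.degree) :
    ∃ i, β i < α i := by
  by_contra hc
  push_neg at hc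
  exact absurd (fdeg_mono (Finsupp.le_def.mpr hc)) (not_le.mpr h)

lemma totalDegree_multiDeriv_le (α : Fin n →₀ ℕ) (p : MvPolynomial (Fin n) ℂ) (m : ℕ)
    (h : p.totalDegree ≤ m + α.degree) : (multiDeriv α p).totalDegree ≤ m := by
  conv_lhs => rw [p.as_sum]
  rw [map_sum]
  refine (MvPolynomial.totalDegree_finset_sum _ _).trans (Finset.sup_le fun β hβ => ?_)
  rw [multiDeriv_monomial]
  by_cases hd : (∏ i, (β i).descFactorial (α i)) = 0
  · rw [hd]
    simp
  · refine (MvPolynomial.totalDegree_monomial_le _ _).trans ?_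
    have hle : α ≤ β := by
      refine Finsupp.le_def.mpr fun i => ?_
      by_contra hlt
      exact hd (Finset.prod_eq_zero (Finset.mem_univ i)
        (Nat.descFactorial_of_lt (not_le.mp hlt)))
    have hβdeg : β.degree ≤ m + α.degree :=
      le_trans (MvPolynomial.le_totalDegree hβ) h
    show (β - α).degree ≤ m
    have := fdeg_tsub hle
    omega

lemma multiDeriv_eq_zero_of_lt (α : Fin n →₀ ℕ) (p : MvPolynomial (Fin n) ℂ)
    (h : p.totalDegree < α.degree) : multiDeriv α p = 0 := by
  conv_lhs => rw [p.as_sum]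
  rw [map_sum]
  refine Finset.sum_eq_zero fun β hβ => ?_
  rw [multiDeriv_monomial]
  have hβdeg : β.degree < α.degree := lt_of_le_of_lt (MvPolynomial.le_totalDegree hβ) h
  obtain ⟨i, hi⟩ := exists_lt_of_fdeg_lt hβdeg
  rw [Finset.prod_eq_zero (Finset.mem_univ i) (Nat.descFactorial_of_lt hi)]
  simp

lemma totalDegree_applyD_le {u : MvPolynomial (Fin n) ℂ} {d : ℕ} (hu : u.IsHomogeneous d)
    (p : MvPolynomial (Fin n) ℂ) (m : ℕ) (h : p.totalDegree ≤ m + d) :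
    (applyD u p).totalDegree ≤ m := by
  rw [applyD]
  refine (MvPolynomial.totalDegree_finset_sum _ _).trans (Finset.sup_le fun α hα => ?_)
  refine (MvPolynomial.totalDegree_smul_le _ _).trans ?_
  refine totalDegree_multiDeriv_le α p m ?_
  have : α.degree = d := by
    rw [Finsupp.degree_eq_weight_one]
    exact hu (MvPolynomial.mem_support_iff.mp hα)
  rw [this]
  exact h

lemma applyD_eq_zero_of_lt {u : MvPolynomial (Fin n) ℂ} {d : ℕ} (hu : u.IsHomogeneous d)
    (p : MvPolynomial (Fin n) ℂ) (h : p.totalDegree < d) : applyD u p = 0 := by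
  rw [applyD]
  refine Finset.sum_eq_zero fun α hα => ?_
  have hdeg : α.degree = d := by
    rw [Finsupp.degree_eq_weight_one]
    exact hu (MvPolynomial.mem_support_iff.mp hα)
  rw [multiDeriv_eq_zero_of_lt α p (hdeg ▸ h), smul_zero]

lemma conjP_conjP (u : MvPolynomial (Fin n) ℂ) : conjP (conjP u) = u := by
  rw [conjP, conjP, MvPolynomial.map_map]
  have : (starRingEnd ℂ).comp (starRingEnd ℂ) = RingHom.id ℂ :=
    RingHom.ext fun z => Complex.conj_conj z
  rw [this, MvPolynomial.map_id]

lemma conjP_isHomogeneous {u : MvPolynomial (Fin n) ℂ} {d : ℕ} (hu : u.IsHomogeneous d) :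
    (conjP u).IsHomogeneous d := hu.map _

lemma applyD_sum_left {ι : Type*} (s : Finset ι) (u : ι → MvPolynomial (Fin n) ℂ)
    (p : MvPolynomial (Fin n) ℂ) :
    applyD (∑ j ∈ s, u j) p = ∑ j ∈ s, applyD (u j) p := by
  induction s using Finset.cons_induction_on with
  | empty => simp [applyD_zero_left]
  | @cons x t hx ih => rw [Finset.sum_cons, Finset.sum_cons, applyD_add_left, ih]

lemma applyD_sum_right {ι : Type*} (s : Finset ι) (u : MvPolynomial (Fin n) ℂ)
    (p : ι → MvPolynomial (Fin n) ℂ) :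
    applyD u (∑ j ∈ s, p j) = ∑ j ∈ s, applyD u (p j) := by
  induction s using Finset.cons_induction_on with
  | empty => simp [applyD_zero_right]
  | @cons x t hx ih => rw [Finset.sum_cons, Finset.sum_cons, applyD_add_right, ih]

/-- Surjectivity with degree control for a single nonzero homogeneous operator. -/
lemma exists_applyD_preimage {q : MvPolynomial (Fin n) ℂ} {d : ℕ} (hq : q ≠ 0)
    (hqh : q.IsHomogeneous d) (m : ℕ) (g : MvPolynomial (Fin n) ℂ)
    (hg : g.totalDegree ≤ m) :
    ∃ h : MvPolynomial (Fin n) ℂ, h.totalDegree ≤ m + d ∧ applyD q h = g := by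
  classical
  set P := MvPolynomial.restrictTotalDegree (Fin n) ℂ m with hP
  have hdegmul : ∀ v : MvPolynomial (Fin n) ℂ, v.totalDegree ≤ m →
      (conjP q * v).totalDegree ≤ m + d := by
    intro v hv
    refine (MvPolynomial.totalDegree_mul _ _).trans ?_
    have h1 : (conjP q).totalDegree ≤ d := (conjP_isHomogeneous hqh).totalDegree_le
    omega
  have hdegC : ∀ v : MvPolynomial (Fin n) ℂ, v.totalDegree ≤ m →
      (applyD q (conjP q * v)).totalDegree ≤ m := by
    intro v hv
    exact totalDegree_applyD_le hqh _ m (hdegmul v hv)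
  let C : P →ₗ[ℂ] P :=
    { toFun := fun v => ⟨applyD q (conjP q * (v : MvPolynomial (Fin n) ℂ)),
        (MvPolynomial.mem_restrictTotalDegree _ _ _).mpr
          (hdegC _ ((MvPolynomial.mem_restrictTotalDegree _ _ _).mp v.2))⟩
      map_add' := by
        intro x y
        ext1
        simp only [Submodule.coe_add]
        rw [mul_add, applyD_add_right]
      map_smul' := by
        intro c x
        ext1
        simp only [SetLike.val_smul, RingHom.id_apply]
        rw [mul_smul_comm, applyD_smul_right] }
  have hCinj : Function.Injective C := by
    rw [← LinearMap.ker_eq_bot, LinearMap.ker_eq_bot']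
    intro v hv0
    have hv0' : applyD q (conjP q * (v : MvPolynomial (Fin n) ℂ)) = 0 := by
      have := congrArg (Subtype.val) hv0
      simpa [C] using this
    by_contra hne
    have hvne : (v : MvPolynomial (Fin n) ℂ) ≠ 0 := by
      intro h
      exact hne (Subtype.ext h)
    set w : MvPolynomial (Fin n) ℂ := conjP q * (v : MvPolynomial (Fin n) ℂ) with hw
    have hwne : w ≠ 0 :=
      mul_ne_zero (fun h => hq (by simpa [conjP_eq_zero_iff] using h)) hvne
    have : applyD (conjP w) w = 0 := by
      rw [hw, conjP_mul, conjP_conjP, mul_comm q (conjP (v : MvPolynomial (Fin n) ℂ)),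
        applyD_mul, ← hw, hv0', applyD_zero_right]
    exact coeff_zero_applyD_conj_ne_zero hwne (by rw [this]; simp)
  have hCsurj : Function.Surjective C := (LinearMap.injective_iff_surjective).mp hCinj
  obtain ⟨v, hv⟩ := hCsurj ⟨g, (MvPolynomial.mem_restrictTotalDegree _ _ _).mpr hg⟩
  refine ⟨conjP q * (v : MvPolynomial (Fin n) ℂ), ?_, ?_⟩
  · exact hdegmul _ ((MvPolynomial.mem_restrictTotalDegree _ _ _).mp v.2)
  · have := congrArg Subtype.val hv
    simpa [C] using this

lemma det_isHomogeneous {r : ℕ} (M : Matrix (Fin r) (Fin r) (MvPolynomial (Fin n) ℂ))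
    (f : Fin r → ℕ) (hM : ∀ i j, (M i j).IsHomogeneous (f i)) :
    M.det.IsHomogeneous (∑ i, f i) := by
  rw [Matrix.det_apply]
  refine MvPolynomial.IsHomogeneous.sum _ _ _ fun σ _ => ?_
  have hprod : (∏ i, M (σ i) i).IsHomogeneous (∑ i, f i) := by
    have := MvPolynomial.IsHomogeneous.prod Finset.univ (fun i => M (σ i) i)
      (fun i => f (σ i)) (fun i _ => hM (σ i) i)
    rwa [Equiv.sum_comp σ f] at this
  rcases Int.units_eq_one_or (Equiv.Perm.sign σ) with h | h <;> rw [h]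
  · simpa using hprod
  · have : ((-1 : ℤˣ) • (∏ i, M (σ i) i)) = -(∏ i, M (σ i) i) := by
      simp [Units.smul_def]
    rw [this]
    exact hprod.neg

lemma adjugate_isHomogeneous {r : ℕ} (Q : Matrix (Fin r) (Fin r) (MvPolynomial (Fin n) ℂ))
    {l₀ : ℕ} (hhom : ∀ i j, (Q i j).IsHomogeneous l₀) (i j : Fin r) :
    (Q.adjugate i j).IsHomogeneous ((r - 1) * l₀) := by
  classical
  rw [Matrix.adjugate_apply]
  have h := det_isHomogeneous (Q.updateRow j (Pi.single i 1))
    (fun k => if k = j then 0 else l₀) (fun k l => ?_)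
  · have hsum : (∑ k : Fin r, if k = j then 0 else l₀) = (r - 1) * l₀ := by
      rw [← Finset.add_sum_erase _ _ (Finset.mem_univ j), if_pos rfl, zero_add,
        Finset.sum_congr rfl (fun k hk => if_neg (Finset.ne_of_mem_erase hk)),
        Finset.sum_const, smul_eq_mul, Finset.card_erase_of_mem (Finset.mem_univ j),
        Finset.card_univ, Fintype.card_fin]
    rwa [hsum] at h
  · by_cases hk : k = j
    · subst hk
      rw [Matrix.updateRow_self, Pi.single_apply]
      simp only [if_pos rfl]
      split_ifs with hl
      · exact MvPolynomial.isHomogeneous_one _ _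
      · exact MvPolynomial.isHomogeneous_zero _ _ _
    · rw [Matrix.updateRow_ne hk]
      simp only [if_neg hk]
      exact hhom k l

lemma exists_vec_preimage {r l₀ : ℕ} (hr : 1 ≤ r) (hl₀ : 1 ≤ l₀)
    (Q : Matrix (Fin r) (Fin r) (MvPolynomial (Fin n) ℂ))
    (hhom : ∀ i j, (Q i j).IsHomogeneous l₀) (hdet : Q.det ≠ 0)
    {N : ℕ} (hN : l₀ ≤ N) (g : Fin r → MvPolynomial (Fin n) ℂ)
    (hg : ∀ i, (g i).totalDegree ≤ N - l₀) :
    ∃ p : Fin r → MvPolynomial (Fin n) ℂ, (∀ i, (p i).totalDegree ≤ N) ∧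
      ∀ i, ∑ j, applyD (Q i j) (p j) = g i := by
  have hdethom : Q.det.IsHomogeneous (r * l₀) := by
    have := det_isHomogeneous Q (fun _ => l₀) (fun i j => hhom i j)
    rwa [Finset.sum_const, Finset.card_univ, Fintype.card_fin, smul_eq_mul] at this
  have harith : (N - l₀) + r * l₀ = N + (r - 1) * l₀ := by
    obtain ⟨r', rfl⟩ : ∃ r', r = r' + 1 := ⟨r - 1, by omega⟩
    rw [Nat.add_sub_cancel]
    have : (r' + 1) * l₀ = r' * l₀ + l₀ := by ring
    omega
  have hch : ∀ k, ∃ h, h.totalDegree ≤ (N - l₀) + r * l₀ ∧ applyD Q.det h = g k :=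
    fun k => exists_applyD_preimage hdet hdethom (N - l₀) (g k) (hg k)
  choose h hdeg happ using hch
  refine ⟨fun j => ∑ k, applyD (Q.adjugate j k) (h k), ?_, ?_⟩
  · intro j
    refine (MvPolynomial.totalDegree_finset_sum _ _).trans (Finset.sup_le fun k _ => ?_)
    refine totalDegree_applyD_le (adjugate_isHomogeneous Q hhom j k) _ N ?_
    rw [← harith] at *
    exact (hdeg k).trans (by omega)
  · intro i
    have key : ∀ j, applyD (Q i j) (∑ k, applyD (Q.adjugate j k) (h k))
        = ∑ k, applyD (Q i j * Q.adjugate j k) (h k) := by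
      intro j
      rw [applyD_sum_right]
      exact Finset.sum_congr rfl fun k _ => (applyD_mul _ _ _).symm
    have hQadj : ∀ k, (∑ j, Q i j * Q.adjugate j k) = if i = k then Q.det else 0 := by
      intro k
      have h1 : (Q * Q.adjugate) i k = ∑ j, Q i j * Q.adjugate j k := Matrix.mul_apply
      rw [Matrix.mul_adjugate] at h1
      rw [← h1, Matrix.smul_apply, Matrix.one_apply, smul_ite, smul_eq_mul, mul_one,
        smul_zero]
    calc ∑ j, applyD (Q i j) (∑ k, applyD (Q.adjugate j k) (h k))
        = ∑ j, ∑ k, applyD (Q i j * Q.adjugate j k) (h k) :=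
          Finset.sum_congr rfl fun j _ => key j
      _ = ∑ k, ∑ j, applyD (Q i j * Q.adjugate j k) (h k) := Finset.sum_comm
      _ = ∑ k, applyD (∑ j, Q i j * Q.adjugate j k) (h k) :=
          Finset.sum_congr rfl fun k _ => (applyD_sum_left _ _ _).symm
      _ = ∑ k, applyD (if i = k then Q.det else 0) (h k) := by
          exact Finset.sum_congr rfl fun k _ => by rw [hQadj k]
      _ = g i := by
          rw [Finset.sum_eq_single i (fun k _ hk => by
            rw [if_neg (fun hik => hk hik.symm), applyD_zero_left])
            (fun hi => absurd (Finset.mem_univ i) hi)]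
          rw [if_pos rfl, happ i]

/-- The number of `d : Fin n →₀ ℕ` with total degree at most `N`. -/
lemma card_degree_le (n N : ℕ) :
    Nat.card {d : Fin n →₀ ℕ // (d.sum fun _ e => e) ≤ N} = (n + N).choose N := by
  classical
  have e1 : {d : Fin n →₀ ℕ // (d.sum fun _ e => e) ≤ N} ≃ {x : Fin n → ℕ // ∑ i, x i ≤ N} := by
    refine Equiv.subtypeEquiv Finsupp.equivFunOnFinite (fun d => ?_)
    rw [Finsupp.sum_fintype _ _ (fun i => rfl)]
    rfl
  have e2 : {x : Fin n → ℕ // ∑ i, x i ≤ N} ≃ {y : Fin (n+1) → ℕ // ∑ i, y i = N} := by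
    refine
      { toFun := fun x => ⟨Fin.cons (N - ∑ i, (x : Fin n → ℕ) i) (x : Fin n → ℕ), ?_⟩
        invFun := fun y => ⟨Fin.tail (y : Fin (n+1) → ℕ), ?_⟩
        left_inv := ?_
        right_inv := ?_ }
    · rw [Fin.sum_univ_succ]
      simp only [Fin.cons_zero, Fin.cons_succ]
      have := x.2
      omega
    · have := y.2
      rw [Fin.sum_univ_succ] at this
      have hle : ∑ i : Fin n, (y : Fin (n+1) → ℕ) i.succ ≤ N := by omega
      exact hle
    · intro x
      ext i
      simp [Fin.tail, Fin.cons_succ]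
    · intro y
      ext i
      refine Fin.cases ?_ (fun j => ?_) i
      · simp only [Fin.cons_zero]
        have := y.2
        rw [Fin.sum_univ_succ] at this
        show N - ∑ i : Fin n, Fin.tail (y : Fin (n+1) → ℕ) i = (y : Fin (n+1) → ℕ) 0
        simp only [Fin.tail]
        omega
      · simp [Fin.tail, Fin.cons_succ]
  have e3 : {y : Fin (n+1) → ℕ // ∑ i, y i = N} ≃ {f : Fin (n+1) →₀ ℕ // (f.sum fun _ e => e) = N} := by
    refine Equiv.subtypeEquiv Finsupp.equivFunOnFinite.symm (fun y => ?_)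
    rw [Finsupp.sum_fintype _ _ (fun i => rfl)]
    rfl
  have e4 : {f : Fin (n+1) →₀ ℕ // (f.sum fun _ e => e) = N}
      ≃ {m : Multiset (Fin (n+1)) // Multiset.card m = N} := by
    refine Equiv.subtypeEquiv Multiset.toFinsupp.toEquiv.symm (fun f => ?_)
    show _ ↔ Multiset.card (Multiset.toFinsupp.symm f) = N
    rw [← Multiset.toFinsupp_sum_eq (Multiset.toFinsupp.symm f),
      AddEquiv.apply_symm_apply]
    exact Iff.rfl
  have e5 : {m : Multiset (Fin (n+1)) // Multiset.card m = N} ≃ Sym (Fin (n+1)) N :=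
    Equiv.refl _
  have : Nat.card {d : Fin n →₀ ℕ // (d.sum fun _ e => e) ≤ N} = Nat.card (Sym (Fin (n+1)) N) :=
    Nat.card_congr ((((e1.trans e2).trans e3).trans e4).trans e5)
  rw [this, Nat.card_eq_fintype_card, Sym.card_sym_eq_choose, Fintype.card_fin]
  congr 1
  omega

lemma finrank_restrictTotalDegree (n N : ℕ) :
    Module.finrank ℂ (MvPolynomial.restrictTotalDegree (Fin n) ℂ N) = (n + N).choose N := by
  classical
  have hfin : Finite {d : Fin n →₀ ℕ | (d.sum fun _ e => e) ≤ N} := by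
    rw [Set.finite_coe_iff]
    have := Finsupp.finite_of_degree_le (σ := Fin n) N
    exact this.subset fun d hd => by exact hd
  have : Fintype {d : Fin n →₀ ℕ | (d.sum fun _ e => e) ≤ N} := Fintype.ofFinite _
  have b := MvPolynomial.basisRestrictSupport ℂ {d : Fin n →₀ ℕ | (d.sum fun _ e => e) ≤ N}
  rw [show MvPolynomial.restrictTotalDegree (Fin n) ℂ N
      = MvPolynomial.restrictSupport ℂ {d : Fin n →₀ ℕ | (d.sum fun _ e => e) ≤ N} from rfl]
  rw [Module.finrank_eq_card_basis b, ← Nat.card_eq_fintype_card]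
  exact card_degree_le n N

noncomputable def applyDL (u : MvPolynomial (Fin n) ℂ) :
    MvPolynomial (Fin n) ℂ →ₗ[ℂ] MvPolynomial (Fin n) ℂ where
  toFun := applyD u
  map_add' := applyD_add_right u
  map_smul' := fun c p => applyD_smul_right u c p

end QH

open QH MvPolynomial in
theorem dim_matrix_Q_harmonic (n r l₀ : ℕ) (hn : 1 ≤ n) (hr : 1 ≤ r) (hl₀ : 1 ≤ l₀)
    (Q : Matrix (Fin r) (Fin r) (MvPolynomial (Fin n) ℂ))
    (hhom : ∀ i j, (Q i j).IsHomogeneous l₀)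
    (hdet : Q.det ≠ 0) (N : ℕ) :
    Module.finrank ℂ
        ↥(Submodule.span ℂ
          {p : Fin r → MvPolynomial (Fin n) ℂ |
            (∀ i, (p i).totalDegree ≤ N) ∧ ∀ i, ∑ j, applyD (Q i j) (p j) = 0}) =
      r * (Nat.choose (n + N) N -
        (if l₀ ≤ N then Nat.choose (n + N - l₀) (N - l₀) else 0)) := by
  classical
  let L : (Fin r → MvPolynomial (Fin n) ℂ) →ₗ[ℂ] (Fin r → MvPolynomial (Fin n) ℂ) :=
    LinearMap.pi (fun i => ∑ j, (applyDL (Q i j)).comp (LinearMap.proj j))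
  have hL : ∀ (p : Fin r → MvPolynomial (Fin n) ℂ) (i : Fin r),
      L p i = ∑ j, applyD (Q i j) (p j) := by
    intro p i
    simp only [L, LinearMap.pi_apply, LinearMap.sum_apply, LinearMap.comp_apply,
      LinearMap.proj_apply]
    rfl
  set K : Submodule ℂ (Fin r → MvPolynomial (Fin n) ℂ) :=
    (Submodule.pi Set.univ fun _ => restrictTotalDegree (Fin n) ℂ N) ⊓ LinearMap.ker L
    with hK
  have hset : {p : Fin r → MvPolynomial (Fin n) ℂ |
      (∀ i, (p i).totalDegree ≤ N) ∧ ∀ i, ∑ j, applyD (Q i j) (p j) = 0} = ↑K := by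
    ext p
    constructor
    · rintro ⟨h1, h2⟩
      refine Submodule.mem_inf.mpr ⟨Submodule.mem_pi.mpr fun i _ =>
        (mem_restrictTotalDegree _ _ _).mpr (h1 i), LinearMap.mem_ker.mpr ?_⟩
      funext i
      show L p i = 0
      rw [hL p i, h2 i]
    · intro hp
      obtain ⟨h1, h2⟩ := Submodule.mem_inf.mp hp
      refine ⟨fun i => (mem_restrictTotalDegree _ _ _).mp
        (Submodule.mem_pi.mp h1 i (Set.mem_univ i)), fun i => ?_⟩
      rw [← hL p i, LinearMap.mem_ker.mp h2]
      rfl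
  rw [hset, Submodule.span_eq]
  set V := (Fin r → ↥(restrictTotalDegree (Fin n) ℂ N)) with hV
  let ι : V →ₗ[ℂ] (Fin r → MvPolynomial (Fin n) ℂ) :=
    LinearMap.pi fun i => (restrictTotalDegree (Fin n) ℂ N).subtype.comp (LinearMap.proj i)
  have hι : ∀ (v : V) i, ι v i = (v i : MvPolynomial (Fin n) ℂ) := fun v i => rfl
  have hι_inj : Function.Injective ι := by
    intro v w h
    funext i
    exact Subtype.ext (congrFun h i)
  have hKmap : K = Submodule.map ι (LinearMap.ker (L.comp ι)) := by
    apply le_antisymm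
    · rintro p hp
      obtain ⟨h1, h2⟩ := Submodule.mem_inf.mp hp
      refine Submodule.mem_map.mpr ⟨fun i => ⟨p i, Submodule.mem_pi.mp h1 i (Set.mem_univ i)⟩,
        LinearMap.mem_ker.mpr ?_, rfl⟩
      exact LinearMap.mem_ker.mp h2
    · intro x hx
      obtain ⟨v, hv, rfl⟩ := Submodule.mem_map.mp hx
      refine Submodule.mem_inf.mpr ⟨Submodule.mem_pi.mpr fun i _ => (v i).2,
        LinearMap.mem_ker.mpr ?_⟩
      exact LinearMap.mem_ker.mp hv
  have hfrK : Module.finrank ℂ ↥K = Module.finrank ℂ ↥(LinearMap.ker (L.comp ι)) := by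
    rw [hKmap]
    exact (Submodule.equivMapOfInjective ι hι_inj _).finrank_eq.symm
  have hfrV : Module.finrank ℂ V = r * (n + N).choose N := by
    show Module.finrank ℂ (Fin r → ↥(restrictTotalDegree (Fin n) ℂ N)) = _
    rw [Module.finrank_pi_fintype, Finset.sum_const, Finset.card_univ, Fintype.card_fin,
      smul_eq_mul, finrank_restrictTotalDegree]
  by_cases hl : l₀ ≤ N
  · rw [if_pos hl]
    set V' := (Fin r → ↥(restrictTotalDegree (Fin n) ℂ (N - l₀))) with hV'
    have hdegsum : ∀ (v : V) (i : Fin r),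
        (∑ j, applyD (Q i j) ((v j : MvPolynomial (Fin n) ℂ))).totalDegree ≤ N - l₀ := by
      intro v i
      refine (totalDegree_finset_sum _ _).trans (Finset.sup_le fun j _ => ?_)
      refine totalDegree_applyD_le (hhom i j) _ (N - l₀) ?_
      have := (mem_restrictTotalDegree _ _ _).mp (v j).2
      omega
    let c : Fin r → (V →ₗ[ℂ] MvPolynomial (Fin n) ℂ) := fun i =>
      ∑ j, (applyDL (Q i j)).comp
        (((restrictTotalDegree (Fin n) ℂ N).subtype).comp (LinearMap.proj j))
    have hc : ∀ (v : V) i, c i v = ∑ j, applyD (Q i j) ((v j : MvPolynomial (Fin n) ℂ)) := by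
      intro v i
      simp only [c, LinearMap.sum_apply, LinearMap.comp_apply, LinearMap.proj_apply]
      rfl
    let L' : V →ₗ[ℂ] V' := LinearMap.pi fun i =>
      LinearMap.codRestrict (restrictTotalDegree (Fin n) ℂ (N - l₀)) (c i)
        (fun v => (mem_restrictTotalDegree _ _ _).mpr (by rw [hc]; exact hdegsum v i))
    have hL' : ∀ (v : V) i, (L' v i : MvPolynomial (Fin n) ℂ)
        = ∑ j, applyD (Q i j) ((v j : MvPolynomial (Fin n) ℂ)) := by
      intro v i
      simp only [L', LinearMap.pi_apply, LinearMap.codRestrict_apply]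
      exact hc v i
    have hkerker : LinearMap.ker (L.comp ι) = LinearMap.ker L' := by
      ext v
      simp only [LinearMap.mem_ker, LinearMap.comp_apply]
      constructor
      · intro h
        funext i
        apply Subtype.ext
        rw [hL' v i]
        have h2 := congrFun h i
        rw [hL (ι v) i] at h2
        exact h2
      · intro h
        funext i
        show L (ι v) i = 0
        rw [hL (ι v) i]
        have h2 : (L' v i : MvPolynomial (Fin n) ℂ) = 0 := by rw [congrFun h i]; rfl
        rw [hL' v i] at h2
        exact h2
    have hsurj : Function.Surjective L' := by
      intro g
      obtain ⟨p, hpdeg, hpeq⟩ := exists_vec_preimage hr hl₀ Q hhom hdet hl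
        (fun i => (g i : MvPolynomial (Fin n) ℂ))
        (fun i => (mem_restrictTotalDegree _ _ _).mp (g i).2)
      refine ⟨fun i => ⟨p i, (mem_restrictTotalDegree _ _ _).mpr (hpdeg i)⟩, ?_⟩
      funext i
      apply Subtype.ext
      rw [hL']
      exact hpeq i
    have hrn := LinearMap.finrank_range_add_finrank_ker L'
    have hrange : Module.finrank ℂ ↥(LinearMap.range L')
        = r * ((n + N - l₀).choose (N - l₀)) := by
      rw [LinearMap.range_eq_top.mpr hsurj, finrank_top]
      show Module.finrank ℂ (Fin r → ↥(restrictTotalDegree (Fin n) ℂ (N - l₀))) = _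
      rw [Module.finrank_pi_fintype, Finset.sum_const, Finset.card_univ, Fintype.card_fin,
        smul_eq_mul, finrank_restrictTotalDegree]
      congr 2
      omega
    rw [hfrK, hkerker, Nat.mul_sub_left_distrib]
    omega
  · rw [if_neg hl]
    have hzero : L.comp ι = 0 := by
      apply LinearMap.ext
      intro v
      funext i
      show L (ι v) i = 0
      rw [hL (ι v) i]
      refine Finset.sum_eq_zero fun j _ => ?_
      refine applyD_eq_zero_of_lt (hhom i j) _ ?_
      have h3 : (ι v j).totalDegree ≤ N := (mem_restrictTotalDegree _ _ _).mp (v j).2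
      omega
    rw [hfrK, LinearMap.ker_eq_top.mpr hzero, finrank_top, hfrV, Nat.sub_zero]
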